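/- Fix N ≥ 1, k ≥ 1 and λ ≥ 0. Let (U_i)_{i ∈ I} be a finite family of unitaries in U(N) with weights p_i ≥ 0 summing to 1 (an ensemble ν), and set G = Σᵢ p_i · U_i^{⊗k,k} and G_H = ∫ U^{⊗k,k} dμ_H(U) where μ_H is the Haar probability measure on U(N). If ‖G − G_H‖ ≤ λ in the ℓ²→ℓ² operator norm, then for every m ≥ 1, ‖G^m − G_H‖ ≤ λ^m. (G^m is the k,k-moment operator of the m-fold iterated ensemble; the paper deduces that the iterated ensemble is an N^{2k}·λ^m-approximate unitary k-design in trace norm.) -/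

import Mathlib

open Matrix MeasureTheory Kronecker

/-- The `k`-fold tensor power of an `N × N` matrix, as a matrix indexed by tuples. -/
noncomputable def tensorPow (N k : ℕ) (U : Matrix (Fin N) (Fin N) ℂ) :
    Matrix (Fin k → Fin N) (Fin k → Fin N) ℂ :=
  Matrix.of fun x y => ∏ i, U (x i) (y i)

/-- `U^{⊗k,k} = U^{⊗k} ⊗ (conj U)^{⊗k}`. -/
noncomputable def tensorPowKK (N k : ℕ) (U : Matrix (Fin N) (Fin N) ℂ) :
    Matrix ((Fin k → Fin N) × (Fin k → Fin N)) ((Fin k → Fin N) × (Fin k → Fin N)) ℂ :=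
  tensorPow N k U ⊗ₖ tensorPow N k (U.map (starRingEnd ℂ))

/-!
Since `G_H` is the Haar average of the representation `U ↦ U^{⊗k,k}`, invariance of Haar measure
gives `G G_H = G_H G = G_H = G_H²`. Hence `G` commutes with `G_H` and `G - G_H = G (1 - G_H)`
with `1 - G_H` idempotent, so `(G - G_H)^m = G^m - G_H` for `m ≥ 1`, and the bound follows from
submultiplicativity of the operator norm.
-/

section Algebra

variable {R : Type*} [Ring R] {a p : R}

theorem IsIdempotentElem.sub_pow_eq_pow_sub (hp : IsIdempotentElem p) (hap : a * p = p)
    (hpa : p * a = p) {m : ℕ} (hm : m ≠ 0) : (a - p) ^ m = a ^ m - p := by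
  have hcomm : Commute a (1 - p) := by
    simp only [Commute, SemiconjBy, mul_sub, sub_mul, mul_one, one_mul, hap, hpa]
  have hpow_mul : ∀ n : ℕ, a ^ n * p = p := fun n => by
    induction n with
    | zero => rw [pow_zero, one_mul]
    | succ n ih => rw [pow_succ', mul_assoc, ih, hap]
  calc (a - p) ^ m = (a * (1 - p)) ^ m := by rw [mul_sub, mul_one, hap]
    _ = a ^ m * (1 - p) := by rw [hcomm.mul_pow, hp.one_sub.pow_eq hm]
    _ = a ^ m - p := by rw [mul_sub, mul_one, hpow_mul]

variable {S : Type*} [CommSemiring S] [Algebra S R] {ι : Type*} (s : Finset ι) {c : ι → S}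
  {A : ι → R}

theorem sum_smul_mul_eq_of_forall_mul_eq (hA : ∀ i ∈ s, A i * p = p)
    (hc : ∑ i ∈ s, c i = 1) : (∑ i ∈ s, c i • A i) * p = p := by
  rw [Finset.sum_mul, Finset.sum_congr rfl fun i hi => by rw [smul_mul_assoc, hA i hi],
    ← Finset.sum_smul, hc, one_smul]

theorem mul_sum_smul_eq_of_forall_mul_eq (hA : ∀ i ∈ s, p * A i = p)
    (hc : ∑ i ∈ s, c i = 1) : p * (∑ i ∈ s, c i • A i) = p := by
  rw [Finset.mul_sum, Finset.sum_congr rfl fun i hi => by rw [mul_smul_comm, hA i hi],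
    ← Finset.sum_smul, hc, one_smul]

end Algebra

instance Matrix.unitaryGroup.compactSpace {n 𝕜 : Type*} [Fintype n] [DecidableEq n]
    [RCLike 𝕜] : CompactSpace (unitaryGroup n 𝕜) :=
  isCompact_iff_compactSpace.mp <|
    (isCompact_univ_pi fun _ => isCompact_univ_pi fun _ => isCompact_closedBall (0 : 𝕜) 1)
      |>.of_isClosed_subset (isClosed_unitary (R := Matrix n n 𝕜)) fun _ hU i _ j _ => by
        simpa using entry_norm_bound_of_unitary hU i j

instance MeasureTheory.Measure.IsHaarMeasure.isMulRightInvariant_of_isProbabilityMeasure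
    {K : Type*} [Group K] [TopologicalSpace K] [IsTopologicalGroup K] [LocallyCompactSpace K]
    [MeasurableSpace K] [BorelSpace K] (μ : Measure K) [μ.IsHaarMeasure]
    [IsProbabilityMeasure μ] : μ.IsMulRightInvariant where
  map_mul_right_eq_self g := by
    have : IsProbabilityMeasure (μ.map (· * g)) :=
      Measure.isProbabilityMeasure_map (continuous_mul_const g).aemeasurable
    exact Measure.isHaarMeasure_eq_of_isProbabilityMeasure _ _

section EntrywiseIntegral

variable {K : Type*} [TopologicalSpace K] [CompactSpace K] [MeasurableSpace K]
  [OpensMeasurableSpace K] {n 𝕜 : Type*} [Fintype n] [RCLike 𝕜]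

noncomputable def entrywiseIntegral (μ : Measure K) (f : K → Matrix n n 𝕜) :
    Matrix n n 𝕜 :=
  Matrix.of fun a b => ∫ g, f g a b ∂μ

variable {μ : Measure K} [IsFiniteMeasure μ] {f : K → Matrix n n 𝕜}

theorem entrywiseIntegral_mul (hf : Continuous f) (M : Matrix n n 𝕜) :
    entrywiseIntegral μ f * M = entrywiseIntegral μ (fun g => f g * M) := by
  ext a b
  simp only [entrywiseIntegral, mul_apply, of_apply]
  rw [integral_finsetSum _ fun c _ => ((hf.matrix_elem a c).integrable_of_hasCompactSupport
    (.of_compactSpace _)).mul_const _]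
  simp only [integral_mul_const]

theorem mul_entrywiseIntegral (hf : Continuous f) (M : Matrix n n 𝕜) :
    M * entrywiseIntegral μ f = entrywiseIntegral μ (fun g => M * f g) := by
  ext a b
  simp only [entrywiseIntegral, mul_apply, of_apply]
  rw [integral_finsetSum _ fun c _ => ((hf.matrix_elem c b).integrable_of_hasCompactSupport
    (.of_compactSpace _)).const_mul _]
  simp only [integral_const_mul]

variable [Group K] [IsTopologicalGroup K] [BorelSpace K] [μ.IsHaarMeasure]
  {ρ : K →ₙ* Matrix n n 𝕜} (hρ : Continuous ρ)
include hρ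

theorem map_mul_entrywiseIntegral (g : K) :
    ρ g * entrywiseIntegral μ ρ = entrywiseIntegral μ ρ := by
  rw [mul_entrywiseIntegral hρ]
  ext a b
  simp only [entrywiseIntegral, of_apply, ← map_mul]
  exact integral_mul_left_eq_self (fun h => ρ h a b) g

variable [IsProbabilityMeasure μ]

theorem entrywiseIntegral_mul_map (g : K) :
    entrywiseIntegral μ ρ * ρ g = entrywiseIntegral μ ρ := by
  rw [entrywiseIntegral_mul hρ]
  ext a b
  simp only [entrywiseIntegral, of_apply, ← map_mul]
  exact integral_mul_right_eq_self (fun h => ρ h a b) g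

theorem isIdempotentElem_entrywiseIntegral : IsIdempotentElem (entrywiseIntegral μ ρ) := by
  rw [IsIdempotentElem, entrywiseIntegral_mul hρ]
  simp_rw [map_mul_entrywiseIntegral hρ]
  ext a b
  simp [entrywiseIntegral]

end EntrywiseIntegral

theorem tensorPow_mul (N k : ℕ) (A B : Matrix (Fin N) (Fin N) ℂ) :
    tensorPow N k (A * B) = tensorPow N k A * tensorPow N k B := by
  ext x y
  simp only [tensorPow, of_apply, mul_apply, Finset.prod_univ_sum, Fintype.piFinset_univ,
    Finset.prod_mul_distrib]

theorem tensorPowKK_mul (N k : ℕ) (A B : Matrix (Fin N) (Fin N) ℂ) :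
    tensorPowKK N k (A * B) = tensorPowKK N k A * tensorPowKK N k B := by
  rw [tensorPowKK, Matrix.map_mul, tensorPow_mul, tensorPow_mul, mul_kronecker_mul, tensorPowKK,
    tensorPowKK]

theorem continuous_tensorPow (N k : ℕ) : Continuous (tensorPow N k) :=
  continuous_matrix fun x y => by
    simpa only [tensorPow, of_apply] using
      continuous_finsetProd Finset.univ fun i _ => continuous_apply_apply (x i) (y i)

theorem continuous_tensorPowKK (N k : ℕ) : Continuous (tensorPowKK N k) :=
  continuous_matrix fun a b => by
    have hconj :=
      (continuous_tensorPow N k).comp (continuous_id.matrix_map Complex.continuous_conj)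
    simp only [tensorPowKK, kroneckerMap_apply]
    exact ((continuous_tensorPow N k).matrix_elem _ _).mul (hconj.matrix_elem _ _)

noncomputable def tensorPowKKMulHom (N k : ℕ) :
    Matrix (Fin N) (Fin N) ℂ →ₙ*
      Matrix ((Fin k → Fin N) × (Fin k → Fin N)) ((Fin k → Fin N) × (Fin k → Fin N))
        ℂ where
  toFun := tensorPowKK N k
  map_mul' := tensorPowKK_mul N k

theorem iterated_tpe_gap_general (N k : ℕ) (lam : ℝ)
    [MeasurableSpace (Matrix.unitaryGroup (Fin N) ℂ)]
    [BorelSpace (Matrix.unitaryGroup (Fin N) ℂ)]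
    (μH : Measure (Matrix.unitaryGroup (Fin N) ℂ))
    [μH.IsHaarMeasure] [IsProbabilityMeasure μH]
    {ι : Type} [Fintype ι]
    (U : ι → Matrix.unitaryGroup (Fin N) ℂ)
    (p : ι → ℝ) (hp1 : ∑ i, p i = 1)
    (G GH : Matrix ((Fin k → Fin N) × (Fin k → Fin N))
      ((Fin k → Fin N) × (Fin k → Fin N)) ℂ)
    (hG : G = ∑ i, (p i : ℂ) • tensorPowKK N k ((U i : Matrix (Fin N) (Fin N) ℂ)))
    (hGH : ∀ a b, GH a b =
      ∫ V : Matrix.unitaryGroup (Fin N) ℂ,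
        tensorPowKK N k ((V : Matrix (Fin N) (Fin N) ℂ)) a b ∂μH)
    (hclose : ‖Matrix.toEuclideanCLM (𝕜 := ℂ) (G - GH)‖ ≤ lam)
    (m : ℕ) (hm : 1 ≤ m) :
    ‖Matrix.toEuclideanCLM (𝕜 := ℂ) (G ^ m - GH)‖ ≤ lam ^ m := by
  set ρ := (tensorPowKKMulHom N k).comp (unitaryGroup (Fin N) ℂ).subtype.toMulHom
  have hρ : Continuous ρ := (continuous_tensorPowKK N k).comp continuous_subtype_val
  have hGH_avg : GH = entrywiseIntegral μH ρ := Matrix.ext hGH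
  have hsum : ∑ i, (p i : ℂ) = 1 := by exact_mod_cast hp1
  have hG_GH : G * GH = GH := by
    rw [hG, hGH_avg]
    exact sum_smul_mul_eq_of_forall_mul_eq _ (fun i _ => map_mul_entrywiseIntegral hρ (U i)) hsum
  have hGH_G : GH * G = GH := by
    rw [hG, hGH_avg]
    exact mul_sum_smul_eq_of_forall_mul_eq _ (fun i _ => entrywiseIntegral_mul_map hρ (U i)) hsum
  have hGH_idem : IsIdempotentElem GH := hGH_avg ▸ isIdempotentElem_entrywiseIntegral hρ
  rw [← hGH_idem.sub_pow_eq_pow_sub hG_GH hGH_G (Nat.one_le_iff_ne_zero.mp hm), map_pow]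
  calc ‖Matrix.toEuclideanCLM (𝕜 := ℂ) (G - GH) ^ m‖
      ≤ ‖Matrix.toEuclideanCLM (𝕜 := ℂ) (G - GH)‖ ^ m := norm_pow_le' _ hm
    _ ≤ lam ^ m := pow_le_pow_left₀ (norm_nonneg _) hclose m

/-- If the `k,k`-moment operator `G` of an ensemble satisfies `‖G − G_H‖ ≤ λ` in
ℓ²→ℓ² operator norm, then `‖G^m − G_H‖ ≤ λ^m` for every `m ≥ 1`. -/
theorem iterated_tpe_gap (N k : ℕ) (hN : 1 ≤ N) (hk : 1 ≤ k)
    (lam : ℝ) (hlam : 0 ≤ lam)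
    [MeasurableSpace (Matrix.unitaryGroup (Fin N) ℂ)]
    [BorelSpace (Matrix.unitaryGroup (Fin N) ℂ)]
    (μH : Measure (Matrix.unitaryGroup (Fin N) ℂ))
    [μH.IsHaarMeasure] [IsProbabilityMeasure μH]
    {ι : Type} [Fintype ι]
    (U : ι → Matrix.unitaryGroup (Fin N) ℂ)
    (p : ι → ℝ) (hp : ∀ i, 0 ≤ p i) (hp1 : ∑ i, p i = 1)
    (G GH : Matrix ((Fin k → Fin N) × (Fin k → Fin N))
      ((Fin k → Fin N) × (Fin k → Fin N)) ℂ)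
    (hG : G = ∑ i, (p i : ℂ) • tensorPowKK N k ((U i : Matrix (Fin N) (Fin N) ℂ)))
    (hGH : ∀ a b, GH a b =
      ∫ V : Matrix.unitaryGroup (Fin N) ℂ,
        tensorPowKK N k ((V : Matrix (Fin N) (Fin N) ℂ)) a b ∂μH)
    (hclose : ‖Matrix.toEuclideanCLM (𝕜 := ℂ) (G - GH)‖ ≤ lam)
    (m : ℕ) (hm : 1 ≤ m) :
    ‖Matrix.toEuclideanCLM (𝕜 := ℂ) (G ^ m - GH)‖ ≤ lam ^ m :=
  iterated_tpe_gap_general N k lam μH U p hp1 G GH hG hGH hclose m hm
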